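/- Let x^{(1)},...,x^{(N)} ∈ R^d and let φ_1,...,φ_N: R^D → R be functions forming a partition of unity (∑_j φ_j(y) = 1 for all y) that are interpolatory at data points y^{(j)} (φ_j(y^{(i)}) = δ_{ij}). Define b_t(ξ,y) = ∑_j φ_j(y)(x^{(j)} - ξ)/(1-t). Then b_t(ξ,y) = (x̄(y) - ξ)/(1-t) where x̄(y) = ∑_j φ_j(y) x^{(j)}, and for each fixed y, every solution of dX_t/dt = b_t(X_t, y) on [0,1) satisfies X_t = (1-t)X_0 + t x̄(y), hence X_t → x̄(y) as t → 1. -/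

import Mathlib

/-!
Since the weights `φ j y` sum to one, the drift is `(x̄(y) - ξ) / (1 - t)`. Along a solution `X`,
the quantity `(X t - x̄(y)) / (1 - t)` then has zero derivative on `[0, 1)`, so it equals
`X 0 - x̄(y)`; this is the affine formula for `X t`, whose limit at `t = 1` is `x̄(y)`.
-/

open Set Filter Topology

theorem Finset.sum_smul_smul_sub_of_sum_eq_one {ι R E : Type*} [Fintype ι] [CommRing R]
    [AddCommGroup E] [Module R E] {w : ι → R} (hw : ∑ j, w j = 1) (c : R) (x : ι → E) (ξ : E) :
    ∑ j, w j • (c • (x j - ξ)) = c • (∑ j, w j • x j - ξ) := by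
  simp only [smul_sub, Finset.sum_sub_distrib, ← Finset.sum_smul, hw, one_smul, Finset.smul_sum,
    smul_comm c]

variable {E : Type*} [NormedAddCommGroup E] [NormedSpace ℝ E]

theorem Convex.eq_of_hasDerivWithinAt_zero {s : Set ℝ} (hs : Convex ℝ s) {f : ℝ → E}
    (hf : ∀ t ∈ s, HasDerivWithinAt f 0 s t) {a b : ℝ} (ha : a ∈ s) (hb : b ∈ s) :
    f a = f b := by
  have := hs.norm_image_sub_le_of_norm_hasDerivWithin_le hf (C := 0) (fun _ _ => by simp) hb ha
  simpa [sub_eq_zero] using this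

theorem HasDerivWithinAt.inv_one_sub_smul_sub {X : ℝ → E} {p : E} {s : Set ℝ} {t : ℝ}
    (hX : HasDerivWithinAt X ((1 - t)⁻¹ • (p - X t)) s t) (ht : t ≠ 1) :
    HasDerivWithinAt (fun t => (1 - t)⁻¹ • (X t - p)) 0 s t := by
  have ht' : 1 - t ≠ 0 := sub_ne_zero.2 ht.symm
  have hinv : HasDerivWithinAt (fun t : ℝ => (1 - t)⁻¹) ((1 - t) ^ 2)⁻¹ s t := by
    refine (((hasDerivWithinAt_id t s).const_sub 1).fun_inv ht').congr_deriv ?_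
    simp
  refine (hinv.smul (hX.sub_const p)).congr_deriv ?_
  rw [smul_smul, ← sq, ← inv_pow, smul_sub, smul_sub]
  module

theorem eq_of_hasDerivWithinAt_bridge {X : ℝ → E} {p : E}
    (hX : ∀ t ∈ Ico (0 : ℝ) 1, HasDerivWithinAt X ((1 - t)⁻¹ • (p - X t)) (Ico 0 1) t) :
    ∀ t ∈ Ico (0 : ℝ) 1, X t = (1 - t) • X 0 + t • p := by
  intro t ht
  have hconst := (convex_Ico (0 : ℝ) 1).eq_of_hasDerivWithinAt_zero
    (fun s hs => (hX s hs).inv_one_sub_smul_sub hs.2.ne) ht (left_mem_Ico.2 one_pos)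
  have ht' : 1 - t ≠ 0 := sub_ne_zero.2 ht.2.ne'
  simp only [sub_zero, inv_one, one_smul] at hconst
  rw [inv_smul_eq_iff₀ ht', sub_eq_iff_eq_add] at hconst
  rw [hconst, smul_sub]
  module

theorem stmt7_general {d D N : ℕ} (x : Fin N → EuclideanSpace ℝ (Fin d))
    (φ : Fin N → EuclideanSpace ℝ (Fin D) → ℝ)
    (hpu : ∀ yy, ∑ j, φ j yy = 1)
    (b : ℝ → EuclideanSpace ℝ (Fin d) → EuclideanSpace ℝ (Fin D) → EuclideanSpace ℝ (Fin d))
    (hb : ∀ t ξ yy, b t ξ yy = ∑ j, φ j yy • ((1 - t)⁻¹ • (x j - ξ))) :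
    (∀ t ξ yy, b t ξ yy = (1 - t)⁻¹ • ((∑ j, φ j yy • x j) - ξ)) ∧
      ∀ (yy : EuclideanSpace ℝ (Fin D)) (X : ℝ → EuclideanSpace ℝ (Fin d)),
        (∀ t ∈ Set.Ico (0:ℝ) 1, HasDerivWithinAt X (b t (X t) yy) (Set.Ico (0:ℝ) 1) t) →
        (∀ t ∈ Set.Ico (0:ℝ) 1, X t = (1 - t) • X 0 + t • ∑ j, φ j yy • x j) ∧
          Filter.Tendsto X (nhdsWithin 1 (Set.Ico (0:ℝ) 1)) (nhds (∑ j, φ j yy • x j)) := by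
  have hdrift : ∀ t ξ yy, b t ξ yy = (1 - t)⁻¹ • ((∑ j, φ j yy • x j) - ξ) := fun t ξ yy => by
    rw [hb, Finset.sum_smul_smul_sub_of_sum_eq_one (hpu yy)]
  refine ⟨hdrift, fun yy X hX => ?_⟩
  have hsol := eq_of_hasDerivWithinAt_bridge fun t ht => hdrift t (X t) yy ▸ hX t ht
  refine ⟨hsol, ?_⟩
  have hline : Tendsto (fun t : ℝ => (1 - t) • X 0 + t • ∑ j, φ j yy • x j) (𝓝 1)
      (𝓝 (∑ j, φ j yy • x j)) := by
    simpa using (Continuous.tendsto (by fun_prop) 1 :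
      Tendsto (fun t : ℝ => (1 - t) • X 0 + t • ∑ j, φ j yy • x j) (𝓝 1) _)
  exact (hline.mono_left nhdsWithin_le_nhds).congr'
    (eventually_nhdsWithin_of_forall fun t ht => (hsol t ht).symm)

theorem stmt7 {d D N : ℕ} (x : Fin N → EuclideanSpace ℝ (Fin d))
    (y : Fin N → EuclideanSpace ℝ (Fin D)) (hy : Function.Injective y)
    (φ : Fin N → EuclideanSpace ℝ (Fin D) → ℝ)
    (hpu : ∀ yy, ∑ j, φ j yy = 1)
    (hinterp : ∀ i j, φ j (y i) = if i = j then 1 else 0)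
    (b : ℝ → EuclideanSpace ℝ (Fin d) → EuclideanSpace ℝ (Fin D) → EuclideanSpace ℝ (Fin d))
    (hb : ∀ t ξ yy, b t ξ yy = ∑ j, φ j yy • ((1 - t)⁻¹ • (x j - ξ))) :
    (∀ t ξ yy, b t ξ yy = (1 - t)⁻¹ • ((∑ j, φ j yy • x j) - ξ)) ∧
      ∀ (yy : EuclideanSpace ℝ (Fin D)) (X : ℝ → EuclideanSpace ℝ (Fin d)),
        (∀ t ∈ Set.Ico (0:ℝ) 1, HasDerivWithinAt X (b t (X t) yy) (Set.Ico (0:ℝ) 1) t) →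
        (∀ t ∈ Set.Ico (0:ℝ) 1, X t = (1 - t) • X 0 + t • ∑ j, φ j yy • x j) ∧
          Filter.Tendsto X (nhdsWithin 1 (Set.Ico (0:ℝ) 1)) (nhds (∑ j, φ j yy • x j)) :=
  stmt7_general x φ hpu b hb
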